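/- Fix n ≥ 1, k ∈ {1,…,n}, and real numbers c_1,…,c_{k−1},c_{k+1},…,c_n. For t ∈ ℝ let P_t(λ) = λ^n + c_1 λ^{n−1} + ⋯ + c_{k−1} λ^{n−k+1} + t λ^{n−k} + c_{k+1} λ^{n−k−1} + ⋯ + c_n, let D = {t ∈ ℝ : all roots of P_t are real and nonnegative}, and for t ∈ D let Λ(t) be the largest root of P_t. Then Λ is concave on D: for all t_0, t_1 ∈ D and s ∈ [0,1] with s·t_0 + (1−s)·t_1 ∈ D, Λ(s·t_0 + (1−s)·t_1) ≥ s·Λ(t_0) + (1−s)·Λ(t_1). In particular, the largest eigenvalue of a positive semidefinite Hermitian matrix is a concave function of each single coefficient of its characteristic polynomial, the other coefficients held fixed. -/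

import Mathlib

/-- The monic real polynomial `λ^n + c_1 λ^{n−1} + ⋯ + c_n` in which the `k`-th
coefficient `c_k` is replaced by the parameter `t`. -/
noncomputable def Pc (n k : ℕ) (c : ℕ → ℝ) (t : ℝ) : Polynomial ℝ :=
  Polynomial.X ^ n + ∑ i ∈ Finset.Icc 1 n,
    Polynomial.C (if i = k then t else c i) * Polynomial.X ^ (n - i)

/-- The set of parameters `t` for which all roots of `Pc n k c t` are real (the polynomial
of degree `n` has `n` real roots with multiplicity) and nonnegative. -/
def Dset (n k : ℕ) (c : ℕ → ℝ) : Set ℝ :=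
  {t | (Pc n k c t).roots.card = n ∧ ∀ r ∈ (Pc n k c t).roots, 0 ≤ r}

/-- The largest real root of `Pc n k c t`. -/
noncomputable def Lam (n k : ℕ) (c : ℕ → ℝ) (t : ℝ) : ℝ :=
  sSup {r : ℝ | (Pc n k c t).IsRoot r}

/-!
Let `Λ₀ ≥ Λ₁` be the largest roots of `P_{t₀}` and `P_{t₁}`, and `l = s Λ₀ + (1 - s) Λ₁`. As
`P_t > 0` beyond its largest root, it suffices to show `P_{t_s}(l) ≤ 0`, where
`P_t(x) = P_{t₁}(x) + (t - t₁) x^{n-k}`. Write `P_{t₁}(x) = (x - Λ₁) Q(x)`. All roots of `Q` lie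
in `[0, Λ₁]` and `deg Q = n - 1 ≥ n - k`, so `Q(x) / x^{n-k}` is nondecreasing for `x ≥ Λ₁`;
comparing it at `l` and at `Λ₀`, where `P_{t₀}` vanishes, gives exactly `P_{t_s}(l) ≤ 0`.
-/

open Polynomial

theorem pow_mul_prod_sub_le_pow_mul_prod_sub {x y : ℝ} (hx : 0 ≤ x) (hxy : x ≤ y)
    {R : Multiset ℝ} (hR : ∀ r ∈ R, 0 ≤ r ∧ r ≤ x) {m : ℕ} (hm : m ≤ Multiset.card R) :
    y ^ m * (R.map (x - ·)).prod ≤ x ^ m * (R.map (y - ·)).prod := by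
  induction R using Multiset.induction_on generalizing m with
  | empty =>
    obtain rfl : m = 0 := by simpa using hm
    simp
  | cons r R ih =>
    have hr := hR r (Multiset.mem_cons_self r R)
    have hR' : ∀ a ∈ R, 0 ≤ a ∧ a ≤ x := fun a ha => hR a (Multiset.mem_cons_of_mem ha)
    have hprod : 0 ≤ (R.map (x - ·)).prod :=
      Multiset.prod_nonneg fun a ha => by
        obtain ⟨b, hb, rfl⟩ := Multiset.mem_map.1 ha
        linarith [(hR' b hb).2]
    simp only [Multiset.map_cons, Multiset.prod_cons]
    cases m with
    | zero =>
      have ih := ih hR' (Nat.zero_le _)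
      simp only [pow_zero, one_mul] at ih ⊢
      exact mul_le_mul (by linarith) ih hprod (by linarith)
    | succ m =>
      have ih := ih hR' (by simpa using hm)
      calc y ^ (m + 1) * ((x - r) * (R.map (x - ·)).prod)
          = (y * (x - r)) * (y ^ m * (R.map (x - ·)).prod) := by ring
        _ ≤ (x * (y - r)) * (x ^ m * (R.map (y - ·)).prod) :=
          mul_le_mul (by nlinarith) ih (mul_nonneg (pow_nonneg (hx.trans hxy) m) hprod)
            (mul_nonneg hx (by linarith))
        _ = x ^ (m + 1) * ((y - r) * (R.map (y - ·)).prod) := by ring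

section LargestRoot

variable {p : ℝ[X]}

theorem sSup_setOf_isRoot_mem_roots (hp : p ≠ 0) (h : p.roots ≠ 0) :
    sSup {r | p.IsRoot r} ∈ p.roots := by
  obtain ⟨r, hr⟩ := Multiset.exists_mem_of_ne_zero h
  exact mem_roots'.2 ⟨hp, Set.Nonempty.csSup_mem ⟨r, (mem_roots'.1 hr).2⟩
    (finite_setOfPred_isRoot hp)⟩

theorem le_sSup_setOf_isRoot {r : ℝ} (hr : r ∈ p.roots) : r ≤ sSup {r | p.IsRoot r} :=
  le_csSup (finite_setOfPred_isRoot (mem_roots'.1 hr).1).bddAbove (mem_roots'.1 hr).2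

theorem Polynomial.Splits.eval_pos_of_forall_roots_lt (hs : p.Splits) (hm : p.Monic) {x : ℝ}
    (h : ∀ r ∈ p.roots, r < x) : 0 < p.eval x := by
  rw [hs.eval_eq_prod_roots_of_monic hm]
  refine Multiset.prod_pos fun a ha => ?_
  obtain ⟨r, hr, rfl⟩ := Multiset.mem_map.1 ha
  exact sub_pos.2 (h r hr)

theorem Polynomial.Splits.eval_eq_sub_mul_prod_erase (hs : p.Splits) (hm : p.Monic) {a : ℝ}
    (ha : a ∈ p.roots) (x : ℝ) :
    p.eval x = (x - a) * ((p.roots.erase a).map (x - ·)).prod := by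
  rw [hs.eval_eq_prod_roots_of_monic hm, ← Multiset.prod_cons, ← Multiset.map_cons,
    Multiset.cons_erase ha]

end LargestRoot

section Pc

variable {n k : ℕ} {c : ℕ → ℝ} {t : ℝ}

theorem degree_sum_C_mul_X_pow_sub_lt (f : ℕ → ℝ) :
    (∑ i ∈ Finset.Icc 1 n, C (f i) * X ^ (n - i)).degree < (n : WithBot ℕ) := by
  refine (degree_sum_le _ _).trans_lt ((Finset.sup_lt_iff (WithBot.bot_lt_coe n)).2 fun i hi => ?_)
  have hlt : n - i < n := by have := Finset.mem_Icc.1 hi; omega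
  exact (degree_C_mul_X_pow_le _ _).trans_lt (WithBot.coe_lt_coe.2 hlt)

theorem monic_Pc : (Pc n k c t).Monic :=
  monic_X_pow_add (degree_sum_C_mul_X_pow_sub_lt _)

theorem natDegree_Pc : (Pc n k c t).natDegree = n := by
  rw [Pc, natDegree_add_eq_left_of_degree_lt, natDegree_X_pow]
  simpa only [degree_X_pow] using degree_sum_C_mul_X_pow_sub_lt _

theorem eval_Pc (hk1 : 1 ≤ k) (hkn : k ≤ n) (t t' x : ℝ) :
    (Pc n k c t).eval x = (Pc n k c t').eval x + (t - t') * x ^ (n - k) := by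
  have hk : k ∈ Finset.Icc 1 n := Finset.mem_Icc.2 ⟨hk1, hkn⟩
  have hrest : ∀ u : ℝ, ∑ i ∈ (Finset.Icc 1 n).erase k, (if i = k then u else c i) * x ^ (n - i) =
      ∑ i ∈ (Finset.Icc 1 n).erase k, c i * x ^ (n - i) :=
    fun u => Finset.sum_congr rfl fun i hi => by rw [if_neg (Finset.ne_of_mem_erase hi)]
  simp only [Pc, eval_add, eval_pow, eval_X, eval_finsetSum, eval_mul, eval_C]
  rw [← Finset.add_sum_erase _ _ hk, ← Finset.add_sum_erase _ _ hk, if_pos rfl, if_pos rfl,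
    hrest, hrest]
  ring

theorem splits_Pc (ht : t ∈ Dset n k c) : (Pc n k c t).Splits :=
  splits_iff_card_roots.2 (ht.1.trans natDegree_Pc.symm)

theorem Lam_mem_roots (hn : 1 ≤ n) (ht : t ∈ Dset n k c) : Lam n k c t ∈ (Pc n k c t).roots :=
  sSup_setOf_isRoot_mem_roots monic_Pc.ne_zero
    (Multiset.card_pos.1 (by rw [ht.1]; omega))

theorem le_Lam {r : ℝ} (hr : r ∈ (Pc n k c t).roots) : r ≤ Lam n k c t :=
  le_sSup_setOf_isRoot hr

theorem Lam_nonneg (hn : 1 ≤ n) (ht : t ∈ Dset n k c) : 0 ≤ Lam n k c t :=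
  ht.2 _ (Lam_mem_roots hn ht)

theorem le_Lam_of_eval_nonpos (ht : t ∈ Dset n k c) {x : ℝ} (hx : (Pc n k c t).eval x ≤ 0) :
    x ≤ Lam n k c t := by
  by_contra! hlt
  exact hx.not_gt <| (splits_Pc ht).eval_pos_of_forall_roots_lt monic_Pc
    fun r hr => (le_Lam hr).trans_lt hlt

end Pc

section Concavity

variable {n k : ℕ} {c : ℕ → ℝ} {t₀ t₁ a b : ℝ}

theorem eval_Pc_combination_nonpos (hk1 : 1 ≤ k) (hkn : k ≤ n)
    (ht₀ : t₀ ∈ Dset n k c) (ht₁ : t₁ ∈ Dset n k c) (ha : 0 ≤ a) (hb : 0 ≤ b) (hab : a + b = 1)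
    (hΛ : Lam n k c t₁ ≤ Lam n k c t₀) (hΛ₀ : 0 < Lam n k c t₀) :
    (Pc n k c (a * t₀ + b * t₁)).eval (a * Lam n k c t₀ + b * Lam n k c t₁) ≤ 0 := by
  have hn : 1 ≤ n := hk1.trans hkn
  set Λ₀ := Lam n k c t₀
  set Λ₁ := Lam n k c t₁
  set l := a * Λ₀ + b * Λ₁
  set m := n - k
  set R := (Pc n k c t₁).roots.erase Λ₁
  set Q : ℝ → ℝ := fun x => (R.map (x - ·)).prod
  have hΛ₁ : Λ₁ ∈ (Pc n k c t₁).roots := Lam_mem_roots hn ht₁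
  have hfactor : ∀ x, (Pc n k c t₁).eval x = (x - Λ₁) * Q x :=
    (splits_Pc ht₁).eval_eq_sub_mul_prod_erase monic_Pc hΛ₁
  have hl₁ : Λ₁ ≤ l := by nlinarith
  have hl₀ : l ≤ Λ₀ := by nlinarith
  have hR : ∀ r ∈ R, 0 ≤ r ∧ r ≤ l := fun r hr =>
    ⟨ht₁.2 r (Multiset.mem_of_mem_erase hr), (le_Lam (Multiset.mem_of_mem_erase hr)).trans hl₁⟩
  have hm : m ≤ Multiset.card R := by
    rw [Multiset.card_erase_of_mem hΛ₁, ht₁.1, Nat.pred_eq_sub_one]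
    omega
  have hmono : Λ₀ ^ m * Q l ≤ l ^ m * Q Λ₀ :=
    pow_mul_prod_sub_le_pow_mul_prod_sub ((Lam_nonneg hn ht₁).trans hl₁) hl₀ hR hm
  have hroot : (Λ₀ - Λ₁) * Q Λ₀ = (t₁ - t₀) * Λ₀ ^ m := by
    rw [← hfactor, eval_Pc hk1 hkn t₁ t₀, (mem_roots'.1 (Lam_mem_roots hn ht₀)).2, zero_add]
  have hscaled : Λ₀ ^ m * (Pc n k c (a * t₀ + b * t₁)).eval l =
      a * ((Λ₀ - Λ₁) * (Λ₀ ^ m * Q l - l ^ m * Q Λ₀)) := by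
    rw [eval_Pc hk1 hkn _ t₁, hfactor]
    linear_combination (a * l ^ m) * hroot + (Λ₀ ^ m * (Λ₁ * Q l + t₁ * l ^ m)) * hab
  refine nonpos_of_mul_nonpos_right ?_ (pow_pos hΛ₀ m)
  rw [hscaled]
  exact mul_nonpos_of_nonneg_of_nonpos ha
    (mul_nonpos_of_nonneg_of_nonpos (sub_nonneg.2 hΛ) (sub_nonpos.2 hmono))

theorem Lam_combination_le (hk1 : 1 ≤ k) (hkn : k ≤ n)
    (ht₀ : t₀ ∈ Dset n k c) (ht₁ : t₁ ∈ Dset n k c) (ha : 0 ≤ a) (hb : 0 ≤ b) (hab : a + b = 1)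
    (hab_mem : a * t₀ + b * t₁ ∈ Dset n k c) (hΛ : Lam n k c t₁ ≤ Lam n k c t₀) :
    a * Lam n k c t₀ + b * Lam n k c t₁ ≤ Lam n k c (a * t₀ + b * t₁) := by
  have hn : 1 ≤ n := hk1.trans hkn
  rcases le_or_gt (Lam n k c t₀) 0 with hΛ₀ | hΛ₀
  · have := Lam_nonneg hn hab_mem
    nlinarith
  · exact le_Lam_of_eval_nonpos hab_mem
      (eval_Pc_combination_nonpos hk1 hkn ht₀ ht₁ ha hb hab hΛ hΛ₀)

end Concavity

theorem stmt_17_general (n k : ℕ) (hk1 : 1 ≤ k) (hkn : k ≤ n) (c : ℕ → ℝ) :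
    ∀ t₀ ∈ Dset n k c, ∀ t₁ ∈ Dset n k c, ∀ s : ℝ, 0 ≤ s → s ≤ 1 →
      s * t₀ + (1 - s) * t₁ ∈ Dset n k c →
      s * Lam n k c t₀ + (1 - s) * Lam n k c t₁ ≤ Lam n k c (s * t₀ + (1 - s) * t₁) := by
  intro t₀ ht₀ t₁ ht₁ s hs0 hs1 hts
  rcases le_total (Lam n k c t₁) (Lam n k c t₀) with hΛ | hΛ
  · exact Lam_combination_le hk1 hkn ht₀ ht₁ hs0 (sub_nonneg.2 hs1) (by ring) hts hΛ
  · rw [add_comm (s * t₀)] at hts ⊢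
    rw [add_comm (s * Lam n k c t₀)]
    exact Lam_combination_le hk1 hkn ht₁ ht₀ (sub_nonneg.2 hs1) hs0 (by ring) hts hΛ

/-- The largest root of a monic real polynomial with all roots real and nonnegative is a
concave function of any single coefficient of the polynomial, the others held fixed. -/
theorem stmt_17 (n k : ℕ) (hn : 1 ≤ n) (hk1 : 1 ≤ k) (hkn : k ≤ n) (c : ℕ → ℝ) :
    ∀ t₀ ∈ Dset n k c, ∀ t₁ ∈ Dset n k c, ∀ s : ℝ, 0 ≤ s → s ≤ 1 →
      s * t₀ + (1 - s) * t₁ ∈ Dset n k c →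
      s * Lam n k c t₀ + (1 - s) * Lam n k c t₁ ≤ Lam n k c (s * t₀ + (1 - s) * t₁) :=
  stmt_17_general n k hk1 hkn c
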